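/- Let J ∈ ℕ, and for each ℓ = 1,…,J let ζ^{(ℓ)} : ℤ → ℝ be absolutely summable. Let c^{(J)} : ℤ → ℝ be a bounded sequence with Δc^{(J)} < ∞, and define recursively c^{(ℓ−1)} = D_{ζ^{(ℓ)}} c^{(ℓ)} for ℓ = J, J−1, …, 1. Then for every ℓ ∈ {0,1,…,J}, Δc^{(ℓ)} ≤ 2^{J−ℓ} · (∏_{m=ℓ+1}^{J} ‖ζ^{(m)}‖₁) · Δc^{(J)}, where ‖ζ‖₁ = Σ_{i∈ℤ}|ζ_i|. -/

import Mathlib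

/-!
Reindexing `i ↦ i + 1` in the sum for `(D_ζ c)_{j+1}` gives
`(D_ζ c)_{j+1} - (D_ζ c)_j = Σ_i ζ_{j-i} (c_{2i+2} - c_{2i})`, and each `c_{2i+2} - c_{2i}` is a sum of
two first differences, so `Δ(D_ζ c) ≤ 2 ‖ζ‖₁ Δc`. Decimation also preserves boundedness
(`|D_ζ c| ≤ ‖ζ‖₁ sup |c|`), so this one-step bound can be iterated down the pyramid from level `J`.
-/

noncomputable section

/-- Sup norm of a bi-infinite real sequence. -/
def supNorm (c : ℤ → ℝ) : ℝ := ⨆ j, |c j|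

/-- Supremum of absolute first differences. -/
def deltaSup (c : ℤ → ℝ) : ℝ := ⨆ j, |c (j + 1) - c j|

/-- ℓ¹ norm of a sequence. -/
def l1Norm (a : ℤ → ℝ) : ℝ := ∑' i, |a i|

/-- The constant K_a = 2 Σ |a_i|·|i|. -/
def Kc (a : ℤ → ℝ) : ℝ := 2 * ∑' i : ℤ, |a i| * |(i : ℝ)|

/-- Subdivision operator (S_α c)_j = Σ_i α_{j-2i} c_i. -/
def subdiv (α c : ℤ → ℝ) : ℤ → ℝ := fun j => ∑' i, α (j - 2 * i) * c i

/-- Decimation operator (D_ζ c)_j = Σ_i ζ_{j-i} c_{2i}. -/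
def decim (ζ c : ℤ → ℝ) : ℤ → ℝ := fun j => ∑' i, ζ (j - i) * c (2 * i)

open Set

section Convolution

variable {ζ : ℤ → ℝ}

lemma summable_abs_comp_sub (hζ : Summable fun i => |ζ i|) (j : ℤ) :
    Summable fun i => |ζ (j - i)| :=
  hζ.comp_injective (Equiv.subLeft j).injective

lemma tsum_abs_comp_sub (j : ℤ) : ∑' i, |ζ (j - i)| = l1Norm ζ :=
  (Equiv.subLeft j).tsum_eq fun i => |ζ i|

variable {d : ℤ → ℝ} {B : ℝ}

lemma summable_abs_comp_sub_mul (hζ : Summable fun i => |ζ i|) (hd : ∀ i, |d i| ≤ B) (j : ℤ) :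
    Summable fun i => |ζ (j - i) * d i| :=
  ((summable_abs_comp_sub hζ j).mul_right B).of_nonneg_of_le (fun _ => abs_nonneg _)
    fun i => by rw [abs_mul]; exact mul_le_mul_of_nonneg_left (hd i) (abs_nonneg _)

lemma abs_tsum_comp_sub_mul_le (hζ : Summable fun i => |ζ i|) (hd : ∀ i, |d i| ≤ B) (j : ℤ) :
    |∑' i, ζ (j - i) * d i| ≤ l1Norm ζ * B := by
  have hsum := summable_abs_comp_sub_mul hζ hd j
  calc |∑' i, ζ (j - i) * d i| ≤ ∑' i, |ζ (j - i) * d i| := by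
        simpa only [Real.norm_eq_abs] using norm_tsum_le_tsum_norm (f := fun i => ζ (j - i) * d i) hsum
    _ ≤ ∑' i, |ζ (j - i)| * B :=
        hsum.tsum_le_tsum (fun i => by rw [abs_mul]; exact mul_le_mul_of_nonneg_left (hd i) (abs_nonneg _))
          ((summable_abs_comp_sub hζ j).mul_right B)
    _ = l1Norm ζ * B := by rw [tsum_mul_right, tsum_abs_comp_sub]

end Convolution

section FirstDifferences

variable {c : ℤ → ℝ}

lemma bddAbove_abs_sub_of_abs_le {M : ℝ} (hc : ∀ j, |c j| ≤ M) :
    BddAbove (range fun j => |c (j + 1) - c j|) :=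
  ⟨M + M, by rintro _ ⟨k, rfl⟩; exact (abs_sub _ _).trans (add_le_add (hc _) (hc _))⟩

lemma abs_add_two_sub_le_deltaSup (hc : BddAbove (range fun j => |c (j + 1) - c j|)) (k : ℤ) :
    |c (k + 2) - c k| ≤ 2 * deltaSup c :=
  calc |c (k + 2) - c k| ≤ |c (k + 1 + 1) - c (k + 1)| + |c (k + 1) - c k| := by
        rw [add_assoc, one_add_one_eq_two]; exact abs_sub_le _ _ _
    _ ≤ 2 * deltaSup c := by
        have hΔ : ∀ k, |c (k + 1) - c k| ≤ deltaSup c := le_ciSup hc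
        linarith [hΔ (k + 1), hΔ k]

end FirstDifferences

section Decimation

variable {ζ c : ℤ → ℝ} {M : ℝ}

lemma abs_decim_le (hζ : Summable fun i => |ζ i|) (hc : ∀ j, |c j| ≤ M) (j : ℤ) :
    |decim ζ c j| ≤ l1Norm ζ * M :=
  abs_tsum_comp_sub_mul_le hζ (fun i => hc (2 * i)) j

lemma decim_add_one_sub (hζ : Summable fun i => |ζ i|) (hc : ∀ j, |c j| ≤ M) (j : ℤ) :
    decim ζ c (j + 1) - decim ζ c j = ∑' i, ζ (j - i) * (c (2 * i + 2) - c (2 * i)) := by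
  have hshift : decim ζ c (j + 1) = ∑' i, ζ (j - i) * c (2 * i + 2) := by
    rw [decim, ← (Equiv.addRight (1 : ℤ)).tsum_eq]
    congr 1 with i
    simp only [Equiv.coe_addRight]
    ring_nf
  rw [hshift, decim, ← Summable.tsum_sub
    (summable_abs_comp_sub_mul hζ (fun i => hc (2 * i + 2)) j).of_abs
    (summable_abs_comp_sub_mul hζ (fun i => hc (2 * i)) j).of_abs]
  simp only [mul_sub]

lemma deltaSup_decim_le (hζ : Summable fun i => |ζ i|) (hc : ∀ j, |c j| ≤ M) :
    deltaSup (decim ζ c) ≤ 2 * l1Norm ζ * deltaSup c := by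
  refine ciSup_le fun j => ?_
  rw [decim_add_one_sub hζ hc j, mul_comm 2, mul_assoc]
  exact abs_tsum_comp_sub_mul_le hζ
    (fun i => abs_add_two_sub_le_deltaSup (bddAbove_abs_sub_of_abs_le hc) (2 * i)) j

end Decimation

section Pyramid

variable {J : ℕ} {ζ : ℕ → ℤ → ℝ} {c : ℕ → ℤ → ℝ}

lemma exists_abs_le_of_decim_chain (hζ : ∀ k < J, Summable fun i => |ζ (k + 1) i|)
    (hrec : ∀ k < J, c k = decim (ζ (k + 1)) (c (k + 1))) (hc : ∃ M, ∀ j, |c J j| ≤ M)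
    {ℓ : ℕ} (hℓ : ℓ ≤ J) : ∃ M, ∀ j, |c ℓ j| ≤ M := by
  induction hℓ using Nat.decreasingInduction with
  | self => exact hc
  | of_succ k hk ih =>
    obtain ⟨M, hM⟩ := ih
    exact ⟨_, fun j => hrec k hk ▸ abs_decim_le (hζ k hk) hM j⟩

lemma deltaSup_le_of_decim_chain (hζ : ∀ k < J, Summable fun i => |ζ (k + 1) i|)
    (hrec : ∀ k < J, c k = decim (ζ (k + 1)) (c (k + 1))) (hc : ∃ M, ∀ j, |c J j| ≤ M)
    {ℓ : ℕ} (hℓ : ℓ ≤ J) :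
    deltaSup (c ℓ) ≤
      2 ^ (J - ℓ) * (∏ m ∈ Finset.Icc (ℓ + 1) J, l1Norm (ζ m)) * deltaSup (c J) := by
  induction hℓ using Nat.decreasingInduction with
  | self => simp
  | of_succ k hk ih =>
    obtain ⟨M, hM⟩ := exists_abs_le_of_decim_chain hζ hrec hc hk
    have hnorm : 0 ≤ l1Norm (ζ (k + 1)) := tsum_nonneg fun _ => abs_nonneg _
    have hprod : ∏ m ∈ Finset.Icc (k + 1) J, l1Norm (ζ m) =
        l1Norm (ζ (k + 1)) * ∏ m ∈ Finset.Icc (k + 1 + 1) J, l1Norm (ζ m) := by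
      rw [← Finset.mul_prod_Ioc_eq_prod_Icc hk, Finset.Icc_add_one_left_eq_Ioc]
    calc deltaSup (c k) ≤ 2 * l1Norm (ζ (k + 1)) * deltaSup (c (k + 1)) :=
          hrec k hk ▸ deltaSup_decim_le (hζ k hk) hM
      _ ≤ 2 * l1Norm (ζ (k + 1)) * (2 ^ (J - (k + 1)) *
            (∏ m ∈ Finset.Icc (k + 1 + 1) J, l1Norm (ζ m)) * deltaSup (c J)) := by gcongr
      _ = _ := by rw [hprod, show J - k = J - (k + 1) + 1 by omega, pow_succ]; ring

end Pyramid

theorem deltaSup_pyramid_levels_general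
    (J : ℕ)
    (ζ : ℕ → ℤ → ℝ)
    (hζ_sum : ∀ ℓ : ℕ, 1 ≤ ℓ → ℓ ≤ J → Summable (fun i => |ζ ℓ i|))
    (c : ℕ → ℤ → ℝ)
    (hc_bdd : ∃ M : ℝ, ∀ j : ℤ, |c J j| ≤ M)
    (hrec : ∀ ℓ : ℕ, 1 ≤ ℓ → ℓ ≤ J → c (ℓ - 1) = decim (ζ ℓ) (c ℓ)) :
    ∀ ℓ : ℕ, ℓ ≤ J →
      deltaSup (c ℓ) ≤
        2 ^ (J - ℓ) * (∏ m ∈ Finset.Icc (ℓ + 1) J, l1Norm (ζ m)) * deltaSup (c J) :=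
  fun _ hℓ => deltaSup_le_of_decim_chain (fun k hk => hζ_sum (k + 1) k.succ_pos hk)
    (fun k hk => hrec (k + 1) k.succ_pos hk) hc_bdd hℓ

/-- Recursive bound on first differences across the pyramid levels. -/
theorem deltaSup_pyramid_levels
    (J : ℕ)
    (ζ : ℕ → ℤ → ℝ)
    (hζ_sum : ∀ ℓ : ℕ, 1 ≤ ℓ → ℓ ≤ J → Summable (fun i => |ζ ℓ i|))
    (c : ℕ → ℤ → ℝ)
    (hc_bdd : ∃ M : ℝ, ∀ j : ℤ, |c J j| ≤ M)
    (hΔcJ : BddAbove (Set.range fun j : ℤ => |c J (j + 1) - c J j|))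
    (hrec : ∀ ℓ : ℕ, 1 ≤ ℓ → ℓ ≤ J → c (ℓ - 1) = decim (ζ ℓ) (c ℓ)) :
    ∀ ℓ : ℕ, ℓ ≤ J →
      deltaSup (c ℓ) ≤
        2 ^ (J - ℓ) * (∏ m ∈ Finset.Icc (ℓ + 1) J, l1Norm (ζ m)) * deltaSup (c J) :=
  deltaSup_pyramid_levels_general J ζ hζ_sum c hc_bdd hrec
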